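/- Terminating very well-poised 5F4 summation: for a nonnegative integer N and complex a, b, d, Σ_{n=0}^{N} [(a)_n (1+a/2)_n (b)_n (d)_n (-N)_n] / [(a/2)_n (1+a-b)_n (1+a-d)_n (1+a+N)_n n!] = (1+a)_N (1+a-b-d)_N / ((1+a-b)_N (1+a-d)_N). -/

import Mathlib

/-!
The sum `S_N(a, b, d)` and the right-hand side `R_N(a, b, d)` satisfy the same first-order
recurrence in `N`,
`S_{N+1} (1+a-b+N)(1+a-d+N) = S_N (1+a+N)(1+a-b-d+N)`.
For `S` this is Zeilberger's creative telescoping: the difference of the summands of the two sides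
is `G(n+1) - G(n)` for an explicit rational multiple `G` of the summand, and the telescoped sum
vanishes because `(-N-1)_{N+2} = 0`. This proves the identity for parameters avoiding all
poles of the recurrence; these form a co-countable, hence dense, subset of `ℂ` in `a`, and both
sides are continuous in `a` wherever the denominators of the statement do not vanish.
-/

/-- Pochhammer symbol (rising factorial) for complex numbers. -/
noncomputable def ph (x : ℂ) (n : ℕ) : ℂ := ∏ i ∈ Finset.range n, (x + i)

open Finset Topology

lemma ph_succ (x : ℂ) (n : ℕ) : ph x (n + 1) = ph x n * (x + n) := prod_range_succ _ _

lemma ph_mul_add (x : ℂ) (n : ℕ) : ph x n * (x + n) = x * ph (x + 1) n := by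
  rw [← ph_succ, ph, prod_range_succ', ph]
  push_cast
  simp only [add_assoc, add_comm (1 : ℂ), add_zero, mul_comm]

lemma ph_ne_zero {x : ℂ} (hx : ∀ i : ℕ, x + i ≠ 0) (n : ℕ) : ph x n ≠ 0 :=
  prod_ne_zero_iff.2 fun i _ => hx i

lemma ph_neg_natCast_of_lt {N n : ℕ} (h : N < n) : ph (-(N : ℂ)) n = 0 :=
  prod_eq_zero (mem_range.2 h) (by simp)

@[fun_prop]
lemma continuous_ph (n : ℕ) : Continuous fun x => ph x n := by
  unfold ph
  fun_prop

lemma ContinuousAt.eq_of_eqOn_dense {X Y : Type*} [TopologicalSpace X] [TopologicalSpace Y]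
    [T2Space Y] {f g : X → Y} {s : Set X} (hs : Dense s) (hfg : Set.EqOn f g s) {x : X}
    (hf : ContinuousAt f x) (hg : ContinuousAt g x) : f x = g x :=
  haveI : (𝓝[s] x).NeBot := mem_closure_iff_clusterPt.mp (hs x)
  tendsto_nhds_unique_of_eventuallyEq (hf.mono_left nhdsWithin_le_nhds)
    (hg.mono_left nhdsWithin_le_nhds) (hfg.eventuallyEq_of_mem self_mem_nhdsWithin)

noncomputable def vwpTerm (a b d : ℂ) (N n : ℕ) : ℂ :=
  ph a n * ph (1 + a / 2) n * ph b n * ph d n * ph (-(N : ℂ)) n /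
    (ph (a / 2) n * ph (1 + a - b) n * ph (1 + a - d) n * ph (1 + a + (N : ℂ)) n *
      (n.factorial : ℂ))

noncomputable def vwpRHS (a b d : ℂ) (N : ℕ) : ℂ :=
  ph (1 + a) N * ph (1 + a - b - d) N / (ph (1 + a - b) N * ph (1 + a - d) N)

/-- No denominator of `vwpTerm a b d N n`, for any `N` and `n`, vanishes. -/
def VWPGeneric (a b d : ℂ) : Prop :=
  ∀ i : ℕ, a / 2 + i ≠ 0 ∧ 1 + a - b + i ≠ 0 ∧ 1 + a - d + i ≠ 0 ∧ 1 + a + i ≠ 0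

/-- Zeilberger's certificate for the recurrence in `N` (as produced by Gosper's algorithm). -/
noncomputable def vwpCert (a b d : ℂ) (N n : ℕ) : ℂ :=
  -vwpTerm a b d (N + 1) n * (n * (n + a - b) * (n + a - d) * (n + a + N + 1)) /
    ((N + 1) * (a + 2 * n))

lemma vwpTerm_succ (a b d : ℂ) (N n : ℕ) :
    vwpTerm a b d N (n + 1) = vwpTerm a b d N n *
      ((a + n) * (1 + a / 2 + n) * (b + n) * (d + n) * (-N + n) /
        ((a / 2 + n) * (1 + a - b + n) * (1 + a - d + n) * (1 + a + N + n) * (n + 1))) := by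
  simp only [vwpTerm, ph_succ, Nat.factorial_succ, div_mul_div_comm]
  push_cast
  congr 1 <;> ring

lemma vwpTerm_eq_succ_mul {a : ℂ} (ha : ∀ i : ℕ, 1 + a + i ≠ 0) (b d : ℂ) (N n : ℕ) :
    vwpTerm a b d N n = vwpTerm a b d (N + 1) n *
      ((N + 1 - n) * (1 + a + N + n) / ((N + 1) * (1 + a + N))) := by
  have hneg : ph (-((N + 1 : ℕ) : ℂ)) n * (N + 1 - n) = (N + 1) * ph (-(N : ℂ)) n := by
    have := ph_mul_add (-((N : ℂ) + 1)) n
    rw [show -((N : ℂ) + 1) + 1 = -N by ring] at this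
    push_cast
    linear_combination -this
  have hshift :
      ph (1 + a + N) n * (1 + a + N + n) = (1 + a + N) * ph (1 + a + ((N + 1 : ℕ) : ℂ)) n := by
    rw [ph_mul_add]
    push_cast
    ring_nf
  have hP : ph (1 + a + N) n ≠ 0 := ph_ne_zero (fun i => by simpa [add_assoc] using ha (N + i)) n
  have hQ : ph (1 + a + ((N + 1 : ℕ) : ℂ)) n ≠ 0 :=
    ph_ne_zero (fun i => by simpa [add_assoc] using ha (N + 1 + i)) n
  have hN : (N : ℂ) + 1 ≠ 0 := by exact_mod_cast N.succ_ne_zero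
  have key : ph (-(N : ℂ)) n / ph (1 + a + N) n =
      ph (-((N + 1 : ℕ) : ℂ)) n / ph (1 + a + ((N + 1 : ℕ) : ℂ)) n *
        ((N + 1 - n) * (1 + a + N + n) / ((N + 1) * (1 + a + N))) := by
    rw [div_mul_div_comm, div_eq_div_iff hP (mul_ne_zero hQ (mul_ne_zero hN (by simpa using ha N)))]
    linear_combination -(1 + a + N + n) * ph (1 + a + N) n * hneg - (N + 1) * ph (-(N : ℂ)) n * hshift
  calc vwpTerm a b d N n
      = ph a n * ph (1 + a / 2) n * ph b n * ph d n /
          (ph (a / 2) n * ph (1 + a - b) n * ph (1 + a - d) n * (n.factorial : ℂ)) *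
        (ph (-(N : ℂ)) n / ph (1 + a + N) n) := by unfold vwpTerm; ring
    _ = _ := by rw [key, vwpTerm]; ring

lemma vwpTerm_eq_zero_of_lt (a b d : ℂ) {N n : ℕ} (h : N < n) : vwpTerm a b d N n = 0 := by
  simp [vwpTerm, ph_neg_natCast_of_lt h]

lemma vwpCert_zero (a b d : ℂ) (N : ℕ) : vwpCert a b d N 0 = 0 := by
  simp [vwpCert]

lemma vwpCert_eq_zero_of_lt (a b d : ℂ) {N n : ℕ} (h : N + 1 < n) : vwpCert a b d N n = 0 := by
  simp [vwpCert, vwpTerm_eq_zero_of_lt a b d h]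

lemma vwpTerm_telescope {a b d : ℂ} (hg : VWPGeneric a b d) (N n : ℕ) :
    vwpTerm a b d (N + 1) n * ((1 + a - b + N) * (1 + a - d + N)) -
        vwpTerm a b d N n * ((1 + a + N) * (1 + a - b - d + N)) =
      vwpCert a b d N (n + 1) - vwpCert a b d N n := by
  -- in the form `field_simp` gives to `2 * (a / 2 + n)`; stated as `a + 2 * n` it fails
  have h1 : a + n * 2 ≠ 0 := by
    have := (hg n).1; contrapose! this; linear_combination this / 2
  have h2 : a + 2 * (n + 1) ≠ 0 := by
    have := (hg (n + 1)).1; contrapose! this; push_cast; linear_combination this / 2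
  have h3 : 1 + a - b + n ≠ 0 := (hg n).2.1
  have h4 : 1 + a - d + n ≠ 0 := (hg n).2.2.1
  have h5 : 1 + a + (N + 1) + n ≠ 0 := by simpa [add_assoc] using (hg (N + 1 + n)).2.2.2
  have h6 : 1 + a + N ≠ 0 := (hg N).2.2.2
  have h7 : (N : ℂ) + 1 ≠ 0 := by exact_mod_cast N.succ_ne_zero
  have h8 : (n : ℂ) + 1 ≠ 0 := by exact_mod_cast n.succ_ne_zero
  rw [vwpCert, vwpCert, vwpTerm_succ a b d (N + 1) n,
    vwpTerm_eq_succ_mul (fun i => (hg i).2.2.2) b d N n]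
  generalize vwpTerm a b d (N + 1) n = t
  push_cast
  field_simp
  ring

lemma vwpSum_succ_mul {a b d : ℂ} (hg : VWPGeneric a b d) (N : ℕ) :
    (∑ n ∈ range (N + 2), vwpTerm a b d (N + 1) n) * ((1 + a - b + N) * (1 + a - d + N)) =
      (∑ n ∈ range (N + 1), vwpTerm a b d N n) * ((1 + a + N) * (1 + a - b - d + N)) := by
  have htel := sum_range_sub (vwpCert a b d N) (N + 2)
  rw [← sum_congr rfl fun n _ => vwpTerm_telescope hg N n, sum_sub_distrib, ← sum_mul, ← sum_mul,
    sum_range_succ (vwpTerm a b d N), vwpTerm_eq_zero_of_lt a b d N.lt_succ_self,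
    vwpCert_zero, vwpCert_eq_zero_of_lt a b d (by omega)] at htel
  linear_combination htel

lemma vwpRHS_succ_mul {a b d : ℂ} (hb : ∀ i : ℕ, 1 + a - b + i ≠ 0)
    (hd : ∀ i : ℕ, 1 + a - d + i ≠ 0) (N : ℕ) :
    vwpRHS a b d (N + 1) * ((1 + a - b + N) * (1 + a - d + N)) =
      vwpRHS a b d N * ((1 + a + N) * (1 + a - b - d + N)) := by
  have hbN := ph_ne_zero hb N
  have hdN := ph_ne_zero hd N
  have hb' := hb N
  have hd' := hd N
  simp only [vwpRHS, ph_succ]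
  field_simp

theorem vwp_sum_eq_of_generic {a b d : ℂ} (hg : VWPGeneric a b d) :
    ∀ N : ℕ, ∑ n ∈ range (N + 1), vwpTerm a b d N n = vwpRHS a b d N
  | 0 => by simp [vwpTerm, vwpRHS, ph]
  | N + 1 => by
    refine mul_right_cancel₀ (mul_ne_zero (hg N).2.1 (hg N).2.2.1) ?_
    rw [vwpSum_succ_mul hg, vwp_sum_eq_of_generic hg N,
      vwpRHS_succ_mul (fun i => (hg i).2.1) (fun i => (hg i).2.2.1)]

lemma countable_setOf_not_vwpGeneric (b d : ℂ) : {a | ¬ VWPGeneric a b d}.Countable := by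
  refine (Set.countable_iUnion fun i : ℕ =>
    ({-2 * (i : ℂ), b - 1 - i, d - 1 - i, -1 - (i : ℂ)} : Set ℂ).toFinite.countable).mono
      fun a ha => ?_
  obtain ⟨i, hi⟩ := not_forall.1 ha
  refine Set.mem_iUnion.2 ⟨i, ?_⟩
  simp only [Set.mem_insert_iff, Set.mem_singleton_iff]
  contrapose! hi
  obtain ⟨h1, h2, h3, h4⟩ := hi
  exact ⟨fun h => h1 (by linear_combination 2 * h), fun h => h2 (by linear_combination h),
    fun h => h3 (by linear_combination h), fun h => h4 (by linear_combination h)⟩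

lemma continuousAt_vwpTerm {a : ℂ} (b d : ℂ) {N n : ℕ} (h1 : ph (a / 2) n ≠ 0)
    (h2 : ph (1 + a - b) n ≠ 0) (h3 : ph (1 + a - d) n ≠ 0) (h4 : ph (1 + a + N) n ≠ 0) :
    ContinuousAt (fun a => vwpTerm a b d N n) a := by
  unfold vwpTerm
  exact ContinuousAt.div (by fun_prop) (by fun_prop)
    (by simp [h1, h2, h3, h4, Nat.factorial_ne_zero])

lemma continuousAt_vwpRHS {a b d : ℂ} {N : ℕ} (hb : ph (1 + a - b) N ≠ 0)
    (hd : ph (1 + a - d) N ≠ 0) : ContinuousAt (fun a => vwpRHS a b d N) a := by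
  unfold vwpRHS
  exact ContinuousAt.div (by fun_prop) (by fun_prop) (mul_ne_zero hb hd)

theorem vwp_5F4_summation_general (N : ℕ) (a b d : ℂ)
    (h1 : ∀ n ≤ N, ph (a / 2) n ≠ 0)
    (h2 : ∀ n ≤ N, ph (1 + a - b) n ≠ 0)
    (h3 : ∀ n ≤ N, ph (1 + a - d) n ≠ 0)
    (h4 : ∀ n ≤ N, ph (1 + a + (N : ℂ)) n ≠ 0) :
    ∑ n ∈ Finset.range (N + 1),
        ph a n * ph (1 + a / 2) n * ph b n * ph d n * ph (-(N : ℂ)) n /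
          (ph (a / 2) n * ph (1 + a - b) n * ph (1 + a - d) n *
            ph (1 + a + (N : ℂ)) n * (n.factorial : ℂ)) =
      ph (1 + a) N * ph (1 + a - b - d) N / (ph (1 + a - b) N * ph (1 + a - d) N) := by
  have hdense : Dense {a | VWPGeneric a b d} := by
    simpa only [Set.compl_ofPred, not_not] using (countable_setOf_not_vwpGeneric b d).dense_compl ℂ
  refine ContinuousAt.eq_of_eqOn_dense (f := fun a => ∑ n ∈ range (N + 1), vwpTerm a b d N n)
    (g := fun a => vwpRHS a b d N) hdense (fun a' ha' => vwp_sum_eq_of_generic ha' N) ?_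
    (continuousAt_vwpRHS (h2 N le_rfl) (h3 N le_rfl))
  refine tendsto_finsetSum _ fun n hn => ?_
  have hn : n ≤ N := Nat.lt_succ_iff.1 (mem_range.1 hn)
  exact continuousAt_vwpTerm b d (h1 n hn) (h2 n hn) (h3 n hn) (h4 n hn)

/-- Terminating very well-poised ₅F₄(1) summation. -/
theorem vwp_5F4_summation (N : ℕ) (a b d : ℂ)
    (h1 : ∀ n ≤ N, ph (a / 2) n ≠ 0)
    (h2 : ∀ n ≤ N, ph (1 + a - b) n ≠ 0)
    (h3 : ∀ n ≤ N, ph (1 + a - d) n ≠ 0)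
    (h4 : ∀ n ≤ N, ph (1 + a + (N : ℂ)) n ≠ 0)
    (h5 : ph (1 + a - b) N ≠ 0) (h6 : ph (1 + a - d) N ≠ 0) :
    ∑ n ∈ Finset.range (N + 1),
        ph a n * ph (1 + a / 2) n * ph b n * ph d n * ph (-(N : ℂ)) n /
          (ph (a / 2) n * ph (1 + a - b) n * ph (1 + a - d) n *
            ph (1 + a + (N : ℂ)) n * (n.factorial : ℂ)) =
      ph (1 + a) N * ph (1 + a - b - d) N / (ph (1 + a - b) N * ph (1 + a - d) N) :=
  vwp_5F4_summation_general N a b d h1 h2 h3 h4
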